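/- Let f : ℝⁿ → ℝ be differentiable with L-Lipschitz gradient, and suppose pruning group g causes degradation at least ε > 0, i.e., f(x + s) ≥ f(x) + ε where [s]_g = −[x]_g and s is zero elsewhere. Then ‖[x]_g‖ ≥ (−‖[∇f(x)]_g‖ + √(‖[∇f(x)]_g‖² + 2Lε)) / L; in particular, an ε-indispensable group cannot have arbitrarily small norm. -/

import Mathlib

/-- The restriction `[x]_g` of a vector to a coordinate group `g` (zero elsewhere). -/
def groupMask {n : ℕ} (x : EuclideanSpace ℝ (Fin n)) (g : Finset (Fin n)) :
    EuclideanSpace ℝ (Fin n) :=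
  WithLp.toLp 2 (fun i => if i ∈ g then x i else 0)

/-- The pruning direction `s` with `[s]_g = −[x]_g` and zero elsewhere. -/
def pruneDir {n : ℕ} (x : EuclideanSpace ℝ (Fin n)) (g : Finset (Fin n)) :
    EuclideanSpace ℝ (Fin n) :=
  WithLp.toLp 2 (fun i => if i ∈ g then -x i else 0)

/-! The descent lemma along the pruning direction `s = -[x]_g`, together with
`⟪∇f x, s⟫ ≤ ‖[∇f x]_g‖ ‖[x]_g‖`, gives `ε ≤ ‖[∇f x]_g‖ r + L/2 r²` for `r = ‖[x]_g‖`;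
the bound is the positive root of this quadratic in `r`. -/

open RealInnerProductSpace Set
open scoped NNReal

section Descent

variable {E : Type*} [NormedAddCommGroup E] [InnerProductSpace ℝ E] [CompleteSpace E]
  {f : E → ℝ}

theorem hasDerivAt_apply_add_smul {x s : E} {t : ℝ} (hf : DifferentiableAt ℝ f (x + t • s)) :
    HasDerivAt (fun t : ℝ => f (x + t • s)) ⟪gradient f (x + t • s), s⟫ t := by
  have hline : HasDerivAt (fun t : ℝ => x + t • s) s t := by
    simpa using ((hasDerivAt_id t).smul_const s).const_add x
  rw [inner_gradient_left]
  exact hf.hasFDerivAt.comp_hasDerivAt t hline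

theorem inner_gradient_add_smul_sub_le {K : ℝ≥0} (hK : LipschitzWith K (gradient f))
    (x s : E) {t : ℝ} (ht : 0 ≤ t) :
    ⟪gradient f (x + t • s) - gradient f x, s⟫ ≤ K * t * ‖s‖ ^ 2 := calc
  _ ≤ ‖gradient f (x + t • s) - gradient f x‖ * ‖s‖ := real_inner_le_norm _ _
  _ ≤ K * ‖x + t • s - x‖ * ‖s‖ := by gcongr; exact hK.norm_sub_le _ _
  _ = K * t * ‖s‖ ^ 2 := by
    rw [add_sub_cancel_left, norm_smul, Real.norm_of_nonneg ht]; ring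

/-- The descent lemma: `t ↦ f (x + t • s) - t ⟪∇f x, s⟫ - K/2 t² ‖s‖²` is antitone on `t ≥ 0`,
since its derivative `⟪∇f (x + t • s) - ∇f x, s⟫ - K t ‖s‖²` is nonpositive there. -/
theorem apply_add_le_of_lipschitzWith_gradient (hf : Differentiable ℝ f) {K : ℝ≥0}
    (hK : LipschitzWith K (gradient f)) (x s : E) :
    f (x + s) ≤ f x + ⟪gradient f x, s⟫ + K / 2 * ‖s‖ ^ 2 := by
  set φ : ℝ → ℝ := fun t => f (x + t • s) - t * ⟪gradient f x, s⟫ - K / 2 * t ^ 2 * ‖s‖ ^ 2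
  have hφ (t : ℝ) :
      HasDerivAt φ (⟪gradient f (x + t • s) - gradient f x, s⟫ - K * t * ‖s‖ ^ 2) t := by
    refine (((hasDerivAt_apply_add_smul (x := x) (s := s) (hf _)).sub
      ((hasDerivAt_id t).mul_const ⟪gradient f x, s⟫)).sub
      (((hasDerivAt_pow 2 t).const_mul (K / 2 : ℝ)).mul_const (‖s‖ ^ 2))).congr_deriv ?_
    rw [inner_sub_left]; push_cast; ring
  have hanti : AntitoneOn φ (Ici 0) := by
    refine antitoneOn_of_deriv_nonpos (convex_Ici 0)
      (fun t _ => (hφ t).continuousAt.continuousWithinAt)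
      (fun t _ => (hφ t).differentiableAt.differentiableWithinAt) fun t ht => ?_
    rw [interior_Ici] at ht
    rw [(hφ t).deriv, sub_nonpos]
    exact inner_gradient_add_smul_sub_le hK x s ht.le
  have h01 : φ 1 ≤ φ 0 := hanti self_mem_Ici (mem_Ici.2 zero_le_one) zero_le_one
  simp only [φ, one_smul, zero_smul, add_zero, one_mul, zero_mul, one_pow, sub_zero,
    mul_zero, ne_eq, OfNat.ofNat_ne_zero, not_false_eq_true, zero_pow] at h01
  linarith

end Descent

section GroupMask

variable {n : ℕ} (x y : EuclideanSpace ℝ (Fin n)) (g : Finset (Fin n))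

theorem pruneDir_eq_neg_groupMask : pruneDir x g = -groupMask x g := by
  ext i
  simp only [pruneDir, groupMask, PiLp.neg_apply, PiLp.toLp_apply]
  split_ifs <;> simp

theorem norm_pruneDir : ‖pruneDir x g‖ = ‖groupMask x g‖ := by
  rw [pruneDir_eq_neg_groupMask, norm_neg]

theorem inner_groupMask_right : ⟪y, groupMask x g⟫ = ⟪groupMask y g, groupMask x g⟫ := by
  simp only [PiLp.inner_apply, RCLike.inner_apply, conj_trivial]
  refine Finset.sum_congr rfl fun i _ => ?_
  by_cases h : i ∈ g <;> simp [groupMask, h]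

theorem inner_pruneDir_le : ⟪y, pruneDir x g⟫ ≤ ‖groupMask y g‖ * ‖groupMask x g‖ := by
  rw [pruneDir_eq_neg_groupMask, inner_neg_right, inner_groupMask_right]
  exact (neg_le_abs _).trans (abs_real_inner_le_norm _ _)

end GroupMask

theorem neg_add_sqrt_div_le_of_le_mul_add_sq {a r L ε : ℝ} (ha : 0 ≤ a) (hr : 0 ≤ r)
    (hL : 0 < L) (h : ε ≤ a * r + L / 2 * r ^ 2) : (-a + √(a ^ 2 + 2 * L * ε)) / L ≤ r := by
  rw [div_le_iff₀ hL, neg_add_le_iff_le_add]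
  calc √(a ^ 2 + 2 * L * ε) ≤ √((a + r * L) ^ 2) := by
        gcongr; nlinarith [mul_le_mul_of_nonneg_left h (by positivity : (0 : ℝ) ≤ 2 * L)]
    _ = a + r * L := Real.sqrt_sq (by positivity)

theorem indispensable_group_norm_lower_bound_general
    {n : ℕ} (f : EuclideanSpace ℝ (Fin n) → ℝ) (x : EuclideanSpace ℝ (Fin n))
    (g : Finset (Fin n)) (L ε : ℝ) (hL : 0 < L)
    (hdiff : Differentiable ℝ f)
    (hlip : LipschitzWith (Real.toNNReal L) (gradient f))
    (hcollapse : f x + ε ≤ f (x + pruneDir x g)) :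
    (-‖groupMask (gradient f x) g‖ +
        Real.sqrt (‖groupMask (gradient f x) g‖ ^ 2 + 2 * L * ε)) / L ≤
      ‖groupMask x g‖ := by
  refine neg_add_sqrt_div_le_of_le_mul_add_sq (norm_nonneg _) (norm_nonneg _) hL ?_
  have hdescent := apply_add_le_of_lipschitzWith_gradient hdiff hlip x (pruneDir x g)
  rw [Real.coe_toNNReal L hL.le, norm_pruneDir] at hdescent
  linarith [inner_pruneDir_le x (gradient f x) g]

/-- An `ε`-indispensable group cannot have arbitrarily small norm: if `f` has `L`-Lipschitz
gradient and pruning group `g` (setting `[x]_g → 0`) increases `f` by at least `ε > 0`, then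
`‖[x]_g‖ ≥ (−‖[∇f(x)]_g‖ + √(‖[∇f(x)]_g‖² + 2Lε))/L`. -/
theorem indispensable_group_norm_lower_bound
    {n : ℕ} (f : EuclideanSpace ℝ (Fin n) → ℝ) (x : EuclideanSpace ℝ (Fin n))
    (g : Finset (Fin n)) (L ε : ℝ) (hL : 0 < L) (hε : 0 < ε)
    (hdiff : Differentiable ℝ f)
    (hlip : LipschitzWith (Real.toNNReal L) (gradient f))
    (hcollapse : f x + ε ≤ f (x + pruneDir x g)) :
    (-‖groupMask (gradient f x) g‖ +
        Real.sqrt (‖groupMask (gradient f x) g‖ ^ 2 + 2 * L * ε)) / L ≤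
      ‖groupMask x g‖ :=
  indispensable_group_norm_lower_bound_general f x g L ε hL hdiff hlip hcollapse
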